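/- The quadratic energy model (QEM) semantics satisfies argument relation contestability: let T be an argumentation tree, let α be a node of T, and let T' be obtained from T by attaching to α a new leaf subtree β (with no attackers or supporters) with base score τ' ∈ [0,1], either as an attacker or as a supporter of α, leaving everything else unchanged. Then if β is a pro node of T', σ_QEM(T') ≥ σ_QEM(T), and if β is a con node of T', σ_QEM(T') ≤ σ_QEM(T). -/
import Mathlib


/-- An argumentation tree: a base score, a list of attacking subtrees,
and a list of supporting subtrees. -/
inductive ATree : Type
  | node (τ : ℝ) (atts : List ATree) (sups : List ATree) : ATree

namespace ATree

/-- The DF-QuAD aggregation function `F`. -/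
def aggF (vs : List ℝ) : ℝ := 1 - (vs.map (fun v => 1 - v)).prod

/-- The DF-QuAD combination function `C`. -/
noncomputable def comb (v0 va vs : ℝ) : ℝ :=
  if va = vs then v0
  else if va > vs then v0 - v0 * (va - vs)
  else v0 + (1 - v0) * (vs - va)

/-- The DF-QuAD strength of an argumentation tree. -/
noncomputable def strength : ATree → ℝ
  | .node τ atts sups =>
      comb τ (aggF (atts.attach.map fun a => strength a.1))
             (aggF (sups.attach.map fun s => strength s.1))
  decreasing_by
  · simp_wf; have := List.sizeOf_lt_of_mem a.2; omega
  · simp_wf; have := List.sizeOf_lt_of_mem s.2; omega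

/-- The QEM influence function `h`. -/
noncomputable def hQEM (v : ℝ) : ℝ := (max v 0) ^ 2 / (1 + (max v 0) ^ 2)

/-- The QEM update function `s`. -/
noncomputable def updQEM (τ E : ℝ) : ℝ := τ + (1 - τ) * hQEM E - τ * hQEM (-E)

/-- The QEM strength of an argumentation tree. -/
noncomputable def qem : ATree → ℝ
  | .node τ atts sups =>
      updQEM τ ((sups.attach.map fun s => qem s.1).sum
                 - (atts.attach.map fun a => qem a.1).sum)
  decreasing_by
  · simp_wf; have := List.sizeOf_lt_of_mem s.2; omega
  · simp_wf; have := List.sizeOf_lt_of_mem a.2; omega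

/-- All base scores lie in `[0,1]`. -/
inductive Valid : ATree → Prop
  | node {τ : ℝ} {atts sups : List ATree} :
      0 ≤ τ → τ ≤ 1 → (∀ A ∈ atts, Valid A) → (∀ S ∈ sups, Valid S) →
      Valid (node τ atts sups)

/-- All base scores lie in the open interval `(0,1)`. -/
inductive ValidOpen : ATree → Prop
  | node {τ : ℝ} {atts sups : List ATree} :
      0 < τ → τ < 1 → (∀ A ∈ atts, ValidOpen A) → (∀ S ∈ sups, ValidOpen S) →
      ValidOpen (node τ atts sups)

/-- `At R pol T T'` holds iff `T'` is obtained from `T` by modifying it at a single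
node `β` of `T` according to the local modification relation `R`, where `pol` is the
polarity of the modified node: `pol = true` means `β` is a pro node (the path from
the root to `β` crosses an even number of attack edges), `pol = false` means `β` is
a con node (odd number of attack edges).  The local relation `R` gets the polarity
of the node it acts at relative to that node itself (used for modifications, such as
attaching a new child, for which the relevant polarity is that of the new child). -/
inductive At (R : Bool → ATree → ATree → Prop) : Bool → ATree → ATree → Prop
  | here {pol : Bool} {T T' : ATree} : R pol T T' → At R pol T T'
  | att {pol : Bool} {τ : ℝ} {a₁ a₂ sups : List ATree} {A A' : ATree} :
      At R pol A A' →
      At R (!pol) (node τ (a₁ ++ A :: a₂) sups) (node τ (a₁ ++ A' :: a₂) sups)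
  | sup {pol : Bool} {τ : ℝ} {atts s₁ s₂ : List ATree} {S S' : ATree} :
      At R pol S S' →
      At R pol (node τ atts (s₁ ++ S :: s₂)) (node τ atts (s₁ ++ S' :: s₂))

/-- Local modification replacing the base score `τ₁` of a node by `τ₂`
(the polarity of a node relative to itself is `true`, i.e. pro). -/
inductive BaseUpd (τ₁ τ₂ : ℝ) : Bool → ATree → ATree → Prop
  | intro {atts sups : List ATree} :
      BaseUpd τ₁ τ₂ true (node τ₁ atts sups) (node τ₂ atts sups)

/-- Local modification attaching a fresh leaf with base score `t` to a node, either
as an attacker (in which case the polarity of the new leaf relative to the node it is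
attached to is `false`) or as a supporter (polarity `true`). -/
inductive AttachLeaf (t : ℝ) : Bool → ATree → ATree → Prop
  | attacker {τ : ℝ} {a₁ a₂ sups : List ATree} :
      AttachLeaf t false (node τ (a₁ ++ a₂) sups)
                         (node τ (a₁ ++ node t [] [] :: a₂) sups)
  | supporter {τ : ℝ} {atts s₁ s₂ : List ATree} :
      AttachLeaf t true (node τ atts (s₁ ++ s₂))
                        (node τ atts (s₁ ++ node t [] [] :: s₂))

end ATree


namespace ATree

theorem qem_node (τ : ℝ) (atts sups : List ATree) :
    qem (.node τ atts sups) =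
      updQEM τ ((sups.map qem).sum - (atts.map qem).sum) := by
  rw [qem]
  congr 1 <;> simp

theorem hQEM_nonneg (v : ℝ) : 0 ≤ hQEM v := by
  unfold hQEM
  positivity

theorem hQEM_le_one (v : ℝ) : hQEM v ≤ 1 := by
  unfold hQEM
  rw [div_le_one (by positivity)]
  nlinarith [sq_nonneg (max v 0)]

theorem hQEM_mono {v w : ℝ} (h : v ≤ w) : hQEM v ≤ hQEM w := by
  unfold hQEM
  have h0 : (0:ℝ) ≤ max v 0 := le_max_right _ _
  have h1 : max v 0 ≤ max w 0 := max_le_max h le_rfl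
  have h2 : (max v 0)^2 ≤ (max w 0)^2 := by nlinarith
  rw [div_le_div_iff₀ (by positivity) (by positivity)]
  nlinarith

theorem updQEM_mono {τ E E' : ℝ} (h0 : 0 ≤ τ) (h1 : τ ≤ 1) (h : E ≤ E') :
    updQEM τ E ≤ updQEM τ E' := by
  unfold updQEM
  have := hQEM_mono h
  have := hQEM_mono (neg_le_neg h)
  nlinarith

theorem hQEM_zero : hQEM 0 = 0 := by simp [hQEM]

theorem qem_leaf (t : ℝ) : qem (.node t [] []) = t := by
  rw [qem_node]
  simp [updQEM, hQEM_zero]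

end ATree

open ATree in
/-- QEM satisfies argument relation contestability: if `T'` is obtained from `T`
by attaching to a node `α` of `T` a new leaf `β` with base score `t ∈ [0,1]`, either
as an attacker or as a supporter of `α`, then σ_QEM(T') ≥ σ_QEM(T) if `β` is a pro
node of `T'`, and σ_QEM(T') ≤ σ_QEM(T) if `β` is a con node of `T'`. -/
theorem qem_argument_relation_contestability
    {T T' : ATree} {t : ℝ} {pol : Bool}
    (hT : T.Valid) (h0 : 0 ≤ t) (h1 : t ≤ 1)
    (hAt : At (AttachLeaf t) pol T T') :
    (pol = true → T.qem ≤ T'.qem) ∧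
    (pol = false → T'.qem ≤ T.qem) := by

  induction hAt with
  | @here pol T T' hR =>
    cases hR with
    | @attacker τ a₁ a₂ sups =>
      refine ⟨fun h => by simp at h, fun _ => ?_⟩
      rw [qem_node, qem_node]
      cases hT with
      | node hτ0 hτ1 _ _ =>
        apply updQEM_mono hτ0 hτ1
        simp [qem_leaf]
        linarith
    | @supporter τ atts s₁ s₂ =>
      refine ⟨fun _ => ?_, fun h => by simp at h⟩
      rw [qem_node, qem_node]
      cases hT with
      | node hτ0 hτ1 _ _ =>
        apply updQEM_mono hτ0 hτ1
        simp [qem_leaf]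
        linarith
  | @att pol τ a₁ a₂ sups A A' _ ih =>
    cases hT with
    | node hτ0 hτ1 hA hS =>
      have hVA : A.Valid := hA A (by simp)
      have ih := ih hVA
      rw [qem_node, qem_node]
      cases pol with
      | true =>
        refine ⟨fun h => by simp at h, fun _ => ?_⟩
        apply updQEM_mono hτ0 hτ1
        have := ih.1 rfl
        simp
        linarith
      | false =>
        refine ⟨fun _ => ?_, fun h => by simp at h⟩
        apply updQEM_mono hτ0 hτ1
        have := ih.2 rfl
        simp
        linarith
  | @sup pol τ atts s₁ s₂ S S' _ ih =>
    cases hT with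
    | node hτ0 hτ1 hA hS =>
      have hVS : S.Valid := hS S (by simp)
      have ih := ih hVS
      rw [qem_node, qem_node]
      cases pol with
      | true =>
        refine ⟨fun _ => ?_, fun h => by simp at h⟩
        apply updQEM_mono hτ0 hτ1
        have := ih.1 rfl
        simp
        linarith
      | false =>
        refine ⟨fun h => by simp at h, fun _ => ?_⟩
        apply updQEM_mono hτ0 hτ1
        have := ih.2 rfl
        simp
        linarith
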